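/- Let A be a unital C*-algebra, n ≥ 2, and let e and f be normal n-potents in A (e^n = e, f^n = f, e*e = ee*, f*f = ff*). If e and f are similar, i.e. z e z^{-1} = f for some invertible z in A, then e and f are unitarily equivalent: there exists a unitary u in A with u e u* = f. -/

import Mathlib

/-!
On the spectrum of a normal `n`-potent `e` every nonzero point is a root of unity, where
`conj k = k⁻¹ = k ^ (2n - 3)`; by the continuous functional calculus `star e = e ^ (2n - 3)`.
Hence a similarity `z e = f z` also intertwines the adjoints, `z (star e) = (star f) z`, so
`e` commutes with `star z * z` and with its square root `|z|`. The unitary factor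
`u = z |z|⁻¹` of the polar decomposition of `z` then satisfies `u e = f u`.
-/

open ComplexConjugate

lemma Complex.conj_eq_pow_of_pow_eq_self {n : ℕ} (hn : 2 ≤ n) {k : ℂ} (hk : k ^ n = k) :
    conj k = k ^ (2 * n - 3) := by
  rcases eq_or_ne k 0 with rfl | hk0
  · simp [zero_pow (by omega : 2 * n - 3 ≠ 0)]
  have hroot : k ^ (n - 1) = 1 :=
    mul_right_cancel₀ hk0 (by rw [← pow_succ, Nat.sub_add_cancel (by omega), hk, one_mul])
  rw [← Complex.inv_eq_conj (Complex.norm_eq_one_of_pow_eq_one hroot (by omega))]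
  refine (eq_inv_of_mul_eq_one_left ?_).symm
  calc k ^ (2 * n - 3) * k = (k ^ (n - 1)) ^ 2 := by
        rw [← pow_succ, ← pow_mul]; congr 1; omega
    _ = 1 := by rw [hroot, one_pow]

lemma IsStarNormal.star_eq_pow_of_pow_eq_self {A : Type*} [CStarAlgebra A] {n : ℕ} (hn : 2 ≤ n)
    {e : A} [IsStarNormal e] (he : e ^ n = e) : star e = e ^ (2 * n - 3) := by
  have hspec : (spectrum ℂ e).EqOn (· ^ n) id :=
    eqOn_of_cfc_eq_cfc (by rw [cfc_pow_id e n, cfc_id ℂ e, he])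
  rw [← cfc_star_id e (R := ℂ), ← cfc_pow_id (R := ℂ) e (2 * n - 3)]
  exact cfc_congr fun k hk => Complex.conj_eq_pow_of_pow_eq_self hn (hspec hk)

namespace CFC

variable {A : Type*} [CStarAlgebra A]

lemma isUnit_abs [PartialOrder A] [StarOrderedRing A] {z : A} (hz : IsUnit z) :
    IsUnit (abs z) :=
  (isUnit_sqrt_iff _).mpr (hz.star.mul hz)

lemma exists_mem_unitary_mul_abs_eq [PartialOrder A] [StarOrderedRing A] (z : Aˣ) :
    ∃ u ∈ unitary A, ∃ a : Aˣ, (a : A) = abs (z : A) ∧ u * a = z := by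
  set a := (isUnit_abs z.isUnit).unit
  have ha_sa : star a = a := Units.ext (abs_nonneg (z : A)).isSelfAdjoint
  have hu : star (↑z * ↑a⁻¹ : A) * (↑z * ↑a⁻¹) = 1 := by
    calc star (↑z * ↑a⁻¹ : A) * (↑z * ↑a⁻¹) = ↑a⁻¹ * (star ↑z * ↑z) * ↑a⁻¹ := by
          rw [star_mul, ← Units.coe_star_inv, ha_sa]; simp only [mul_assoc]
      _ = ↑a⁻¹ * (↑a * ↑a) * ↑a⁻¹ := by rw [IsUnit.unit_spec, abs_mul_abs]
      _ = 1 := by simp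
  exact ⟨↑z * ↑a⁻¹, (z * a⁻¹).isUnit.mem_unitary_of_star_mul_self hu, a, rfl, by simp⟩

lemma exists_mem_unitary_semiconjBy (z : Aˣ) {e f : A} (h : SemiconjBy (z : A) e f)
    (hstar : SemiconjBy (z : A) (star e) (star f)) : ∃ u ∈ unitary A, SemiconjBy u e f := by
  let _ := CStarAlgebra.spectralOrder A
  let _ := CStarAlgebra.spectralOrderedRing A
  obtain ⟨u, hu, a, ha, hua⟩ := exists_mem_unitary_mul_abs_eq z
  have hadj : SemiconjBy (star (z : A)) f e := by simpa using hstar.star_star_star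
  have hcomm : Commute (star (z : A) * z) e := hadj.mul_left h
  have ha_comm : Commute (a : A) e :=
    ha ▸ (hcomm.cfcₙ_nnreal NNReal.sqrt : Commute (abs (z : A)) e)
  have hua_semiconj : SemiconjBy (u * a * ↑a⁻¹) e f := (hua ▸ h).mul_left ha_comm.units_inv_left
  exact ⟨u, hu, by rwa [Units.mul_inv_cancel_right] at hua_semiconj⟩

end CFC

/-- In a unital C*-algebra, similar normal `n`-potents are unitarily equivalent. -/
theorem normal_npotent_similar_implies_unitarily_equivalent {A : Type*} [NormedRing A]
    [StarRing A] [CStarRing A] [NormedAlgebra ℂ A] [CompleteSpace A] [StarModule ℂ A]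
    (n : ℕ) (hn : 2 ≤ n) (e f : A)
    (he : e ^ n = e) (hf : f ^ n = f)
    (hne : star e * e = e * star e) (hnf : star f * f = f * star f)
    (hs : ∃ z : Aˣ, z.val * e * (z⁻¹).val = f) :
    ∃ u : A, star u * u = 1 ∧ u * star u = 1 ∧ u * e * star u = f := by
  let _ : CStarAlgebra A :=
    { ‹NormedRing A›, ‹StarRing A›, ‹CompleteSpace A›, ‹CStarRing A›,
      ‹NormedAlgebra ℂ A›, ‹StarModule ℂ A› with }
  have : IsStarNormal e := ⟨hne⟩
  have : IsStarNormal f := ⟨hnf⟩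
  obtain ⟨z, hz⟩ := hs
  have h : SemiconjBy (z : A) e f := (Units.mul_inv_eq_iff_eq_mul (b := z)).mp hz
  have hstar : SemiconjBy (z : A) (star e) (star f) := by
    rw [IsStarNormal.star_eq_pow_of_pow_eq_self hn he,
      IsStarNormal.star_eq_pow_of_pow_eq_self hn hf]
    exact h.pow_right _
  obtain ⟨u, hu, hue⟩ := CFC.exists_mem_unitary_semiconjBy z h hstar
  refine ⟨u, Unitary.star_mul_self_of_mem hu, Unitary.mul_star_self_of_mem hu, ?_⟩
  rw [hue.eq, mul_assoc, Unitary.mul_star_self_of_mem hu, mul_one]
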